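/- arXiv:2207.07222 — 5 statements merged into one kernel-verified Lean document; each statement's English description precedes it below -/
import Mathlib

section
/- Let q^0 be the zero matrix and define q^{t+1} = h(q^t) for all t ∈ ℕ. Then for every t ≥ 1 and every index (i,j), we have 0 ≤ q^t_{i,j} ≤ 1, and the limit L_{i,j} := lim_{t→∞} q^t_{i,j} exists (each componentwise sequence converges in ℝ). -/
open Filter Topology

/-- The logistic function σ(x) = exp(x)/(1+exp(x)). -/
noncomputable def logistic (x : ℝ) : ℝ := Real.exp x / (1 + Real.exp x)

/-- The choice-probability map h(q)_{i,j} = σ(y_{i,j} − β_{i,j}·F_i + α_{i,j}·Σ_k λ_k·q_{i,k}). -/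
noncomputable def hmap {n m : ℕ} (y β α : Fin n → Fin m → ℝ) (F : Fin n → ℝ)
    (lam : Fin m → ℝ) (q : Fin n → Fin m → ℝ) : Fin n → Fin m → ℝ :=
  fun i j => logistic (y i j - β i j * F i + α i j * ∑ k, lam k * q i k)

lemma logistic_nonneg (x : ℝ) : 0 ≤ logistic x :=
  div_nonneg (Real.exp_pos x).le (by positivity)

lemma logistic_le_one (x : ℝ) : logistic x ≤ 1 := by
  rw [logistic, div_le_one (by positivity)]; linarith

lemma logistic_mono : Monotone logistic := by
  intro a b hab
  have ha := Real.exp_pos a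
  have hb := Real.exp_pos b
  rw [logistic, logistic, div_le_div_iff₀ (by positivity) (by positivity)]
  have := Real.exp_le_exp.2 hab
  nlinarith

theorem stmt_4 {n m : ℕ} (y β α : Fin n → Fin m → ℝ) (F : Fin n → ℝ) (lam : Fin m → ℝ)
    (hα : ∀ i j, 0 ≤ α i j) (hlam : ∀ j, 0 ≤ lam j)
    (Q : ℕ → Fin n → Fin m → ℝ)
    (hQ0 : Q 0 = fun _ _ => 0)
    (hQ : ∀ t, Q (t + 1) = hmap y β α F lam (Q t)) :
    (∀ t, 1 ≤ t → ∀ i j, 0 ≤ Q t i j ∧ Q t i j ≤ 1) ∧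
      ∃ L : Fin n → Fin m → ℝ, ∀ i j,
        Tendsto (fun t => Q t i j) atTop (𝓝 (L i j)) := by
  have hbounds : ∀ t, 1 ≤ t → ∀ i j, 0 ≤ Q t i j ∧ Q t i j ≤ 1 := by
    rintro ⟨_, _⟩ ht i j
    · omega
    · rename_i t
      rw [hQ t]
      exact ⟨logistic_nonneg _, logistic_le_one _⟩
  refine ⟨hbounds, ?_⟩
  -- monotonicity of Q in t
  have hmono : ∀ t, ∀ i j, Q t i j ≤ Q (t + 1) i j := by
    intro t
    induction t with
    | zero => intro i j; rw [hQ0, hQ]; exact logistic_nonneg _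
    | succ t ih =>
      intro i j
      rw [hQ t, hQ (t + 1)]
      apply logistic_mono
      have : (∑ k, lam k * Q t i k) ≤ ∑ k, lam k * Q (t + 1) i k :=
        Finset.sum_le_sum fun k _ => mul_le_mul_of_nonneg_left (ih i k) (hlam k)
      nlinarith [hα i j]
  have hmono' : ∀ i j, Monotone (fun t => Q t i j) := fun i j =>
    monotone_nat_of_le_succ (fun t => hmono t i j)
  have hbdd : ∀ i j, ∀ t, Q t i j ≤ 1 := by
    intro i j t
    cases t with
    | zero => rw [hQ0]; norm_num
    | succ t => exact (hbounds (t + 1) (by omega) i j).2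
  refine ⟨fun i j => ⨆ t, Q t i j, fun i j => ?_⟩
  exact tendsto_atTop_ciSup (hmono' i j) ⟨1, fun x ⟨t, ht⟩ => ht ▸ hbdd i j t⟩
end

section
/- Let q^0 be the zero matrix and define q^{t+1} = h(q^t) for all t ∈ ℕ. If p is any fixed point of h (h(p) = p) with p ≥ 0 componentwise, then q^t ≤ p componentwise for every t ∈ ℕ; consequently, if L is the componentwise limit of (q^t), then q^1 ≤ L ≤ p. In particular L is the smallest fixed point of h, and L is bounded above by the largest fixed point q̄ whenever q̄ exists (Lemma 1, part (i)). -/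
open Filter Topology

lemma logistic_mono_s6 {x y : ℝ} (h : x ≤ y) : logistic x ≤ logistic y := by
  unfold logistic
  rw [div_le_div_iff₀ (by positivity) (by positivity)]
  have hx := Real.exp_pos x
  have hy := Real.exp_pos y
  nlinarith [Real.exp_le_exp.2 h]

lemma hmap_mono {n m : ℕ} (y β α : Fin n → Fin m → ℝ) (F : Fin n → ℝ) (lam : Fin m → ℝ)
    (hα : ∀ i j, 0 ≤ α i j) (hlam : ∀ j, 0 ≤ lam j)
    {q q' : Fin n → Fin m → ℝ} (h : ∀ i j, q i j ≤ q' i j) :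
    ∀ i j, hmap y β α F lam q i j ≤ hmap y β α F lam q' i j := by
  intro i j
  apply logistic_mono_s6
  have : ∑ k, lam k * q i k ≤ ∑ k, lam k * q' i k :=
    Finset.sum_le_sum fun k _ => mul_le_mul_of_nonneg_left (h i k) (hlam k)
  nlinarith [hα i j]

theorem stmt_6 {n m : ℕ} (y β α : Fin n → Fin m → ℝ) (F : Fin n → ℝ) (lam : Fin m → ℝ)
    (hα : ∀ i j, 0 ≤ α i j) (hlam : ∀ j, 0 ≤ lam j)
    (Q : ℕ → Fin n → Fin m → ℝ)
    (hQ0 : Q 0 = fun _ _ => 0)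
    (hQ : ∀ t, Q (t + 1) = hmap y β α F lam (Q t))
    (p : Fin n → Fin m → ℝ) (hp : hmap y β α F lam p = p)
    (hp0 : ∀ i j, 0 ≤ p i j) :
    (∀ t i j, Q t i j ≤ p i j) ∧
      ∀ L : Fin n → Fin m → ℝ,
        (∀ i j, Tendsto (fun t => Q t i j) atTop (𝓝 (L i j))) →
          ∀ i j, Q 1 i j ≤ L i j ∧ L i j ≤ p i j := by
  have hle : ∀ t i j, Q t i j ≤ p i j := by
    intro t
    induction t with
    | zero => intro i j; rw [hQ0]; exact hp0 i j
    | succ t ih =>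
      intro i j
      rw [hQ t, ← hp]
      exact hmap_mono y β α F lam hα hlam ih i j
  have hmonot : ∀ t i j, Q t i j ≤ Q (t + 1) i j := by
    intro t
    induction t with
    | zero =>
      intro i j
      rw [hQ0, hQ 0]
      exact logistic_nonneg _
    | succ t ih =>
      intro i j
      rw [hQ t, hQ (t + 1)]
      exact hmap_mono y β α F lam hα hlam ih i j
  have hmono : ∀ i j, Monotone fun t => Q t i j := fun i j =>
    monotone_nat_of_le_succ fun t => hmonot t i j
  refine ⟨hle, fun L hL i j => ⟨?_, ?_⟩⟩
  · exact ge_of_tendsto (hL i j)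
      (eventually_atTop.2 ⟨1, fun t ht => hmono i j ht⟩)
  · exact le_of_tendsto (hL i j) (Filter.Eventually.of_forall fun t => hle t i j)
end

section
/- Let q^0 be the all-ones matrix and define q^{t+1} = h(q^t) for all t ∈ ℕ. Then the sequence (q^t) is monotone nonincreasing in the componentwise order (q^{t+1} ≤ q^t for all t), each q^t satisfies 0 ≤ q^t_{i,j} ≤ 1, and the componentwise limit L := lim_{t→∞} q^t exists; in particular L ≤ q^1. -/
open Filter Topology

lemma one_add_exp_pos (x : ℝ) : 0 < 1 + Real.exp x := by positivity

lemma logistic_pos (x : ℝ) : 0 < logistic x :=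
  div_pos (Real.exp_pos x) (one_add_exp_pos x)

theorem stmt_7 {n m : ℕ} (y β α : Fin n → Fin m → ℝ) (F : Fin n → ℝ) (lam : Fin m → ℝ)
    (hα : ∀ i j, 0 ≤ α i j) (hlam : ∀ j, 0 ≤ lam j)
    (Q : ℕ → Fin n → Fin m → ℝ)
    (hQ0 : Q 0 = fun _ _ => 1)
    (hQ : ∀ t, Q (t + 1) = hmap y β α F lam (Q t)) :
    (∀ t i j, Q (t + 1) i j ≤ Q t i j) ∧
      (∀ t i j, 0 ≤ Q t i j ∧ Q t i j ≤ 1) ∧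
      ∃ L : Fin n → Fin m → ℝ,
        (∀ i j, Tendsto (fun t => Q t i j) atTop (𝓝 (L i j))) ∧
          ∀ i j, L i j ≤ Q 1 i j := by
  have hmono : ∀ q q' : Fin n → Fin m → ℝ, (∀ i j, q i j ≤ q' i j) →
      ∀ i j, hmap y β α F lam q i j ≤ hmap y β α F lam q' i j := by
    intro q q' hle i j
    apply logistic_mono
    have : α i j * ∑ k, lam k * q i k ≤ α i j * ∑ k, lam k * q' i k := by
      apply mul_le_mul_of_nonneg_left _ (hα i j)
      exact Finset.sum_le_sum fun k _ => mul_le_mul_of_nonneg_left (hle i k) (hlam k)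
    linarith
  have hdec : ∀ t i j, Q (t + 1) i j ≤ Q t i j := by
    intro t
    induction t with
    | zero =>
      intro i j
      rw [hQ 0, hQ0]
      exact logistic_le_one _
    | succ s ih =>
      intro i j
      have h := hmono _ _ ih i j
      rwa [← hQ, ← hQ] at h
  have hbd : ∀ t i j, 0 ≤ Q t i j ∧ Q t i j ≤ 1 := by
    intro t i j
    cases t with
    | zero => rw [hQ0]; exact ⟨zero_le_one, le_refl 1⟩
    | succ s =>
      rw [hQ s]
      exact ⟨(logistic_pos _).le, logistic_le_one _⟩
  refine ⟨hdec, hbd, fun i j => ⨅ t, Q t i j, ?_, ?_⟩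
  · intro i j
    have hanti : Antitone fun t => Q t i j :=
      antitone_nat_of_succ_le fun t => hdec t i j
    exact tendsto_atTop_ciInf hanti ⟨0, fun x ⟨t, ht⟩ => ht ▸ (hbd t i j).1⟩
  · intro i j
    exact ciInf_le ⟨0, fun x ⟨t, ht⟩ => ht ▸ (hbd t i j).1⟩ 1
end

section
/- The map h has at least one fixed point p in the closed unit cube, i.e., there exists p : Fin n → Fin m → ℝ with 0 ≤ p_{i,j} ≤ 1 for all i, j and h(p) = p. -/
open Filter Topology

lemma logistic_lt_one (x : ℝ) : logistic x < 1 := by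
  rw [logistic, div_lt_one (by positivity)]
  linarith

theorem stmt_9 {n m : ℕ} (y β α : Fin n → Fin m → ℝ) (F : Fin n → ℝ) (lam : Fin m → ℝ)
    (hα : ∀ i j, 0 ≤ α i j) (hlam : ∀ j, 0 ≤ lam j) :
    ∃ p : Fin n → Fin m → ℝ,
      (∀ i j, 0 ≤ p i j ∧ p i j ≤ 1) ∧ hmap y β α F lam p = p := by
  haveI : Fact ((0:ℝ) ≤ 1) := ⟨zero_le_one⟩
  set I := Set.Icc (0:ℝ) 1
  -- monotone map on the complete lattice (Fin n → Fin m → I)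
  let f : (Fin n → Fin m → I) → (Fin n → Fin m → I) := fun q i j =>
    ⟨logistic (y i j - β i j * F i + α i j * ∑ k, lam k * (q i k : ℝ)),
      (logistic_pos _).le, (logistic_lt_one _).le⟩
  have hf : Monotone f := by
    intro q r hqr i j
    show (f q i j : ℝ) ≤ (f r i j : ℝ)
    apply logistic_mono
    have : (∑ k, lam k * (q i k : ℝ)) ≤ ∑ k, lam k * (r i k : ℝ) := by
      apply Finset.sum_le_sum
      intro k _
      exact mul_le_mul_of_nonneg_left (hqr i k) (hlam k)
    nlinarith [hα i j]
  set q := OrderHom.lfp ⟨f, hf⟩ with hqdef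
  have hq : f q = q := OrderHom.map_lfp ⟨f, hf⟩
  refine ⟨fun i j => (q i j : ℝ), fun i j => ⟨(q i j).2.1, (q i j).2.2⟩, ?_⟩
  funext i j
  have := congrFun (congrFun hq i) j
  simpa [hmap, f] using congrArg Subtype.val this
end

section
/- Scalar fixed-point iteration converges from above to the largest solution (Case 1 instance of Lemma 1(ii)): for real numbers y, F and α ≥ 0, define q^0 = 1 and q^{t+1} = σ(y − F + α·q^t). Then (q^t) is monotone nonincreasing, bounded below by 0, its limit L exists and satisfies L = σ(y − F + α·L), L ≤ q^1, and p ≤ L for every p ∈ [0,1] with p = σ(y − F + α·p); i.e., L is the largest solution of the self-consistency equation in [0,1]. -/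
/-!
The map `f q = σ(y - F + α q)` is monotone (as `α ≥ 0`) and continuous, and maps `ℝ` into `[0, 1]`.
Since `f 1 ≤ 1`, the iterates of `f` from `1` decrease, are bounded below by `0` and converge to a
fixed point `L` of `f`. Any fixed point `p ≤ 1` satisfies `p = f^[n] p ≤ f^[n] 1` by monotonicity,
hence `p ≤ L`.
-/

open Filter Topology

open Function

theorem logistic_eq_sigmoid : logistic = Real.sigmoid := by
  funext x
  rw [logistic, Real.sigmoid_def, Real.exp_neg]
  have := Real.exp_pos x
  field_simp
  ring

theorem Monotone.exists_tendsto_iterate_isGreatest_fixedPoints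
    {α : Type*} [ConditionallyCompleteLinearOrder α] [TopologicalSpace α] [OrderTopology α]
    {f : α → α} (hf : Monotone f) (hfc : Continuous f) {x₀ : α} (hx₀ : f x₀ ≤ x₀)
    (hbdd : BddBelow (Set.range fun n => f^[n] x₀)) :
    ∃ L, Tendsto (fun n => f^[n] x₀) atTop (𝓝 L) ∧
      IsGreatest (fixedPoints f ∩ Set.Iic x₀) L := by
  have hL := tendsto_atTop_ciInf (hf.antitone_iterate_of_map_le hx₀) hbdd
  refine ⟨_, hL, ⟨isFixedPt_of_tendsto_iterate hL hfc.continuousAt, ?_⟩, ?_⟩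
  · exact ciInf_le hbdd 0
  · rintro p ⟨hp, hpx₀⟩
    refine le_ciInf fun n => ?_
    calc p = f^[n] p := (hp.iterate n).symm
      _ ≤ f^[n] x₀ := hf.iterate n hpx₀

theorem stmt_13 (y F α : ℝ) (hα : 0 ≤ α)
    (Q : ℕ → ℝ) (hQ0 : Q 0 = 1)
    (hQ : ∀ t, Q (t + 1) = logistic (y - F + α * Q t)) :
    Antitone Q ∧ (∀ t, 0 ≤ Q t) ∧
      ∃ L : ℝ, Tendsto Q atTop (𝓝 L) ∧ L = logistic (y - F + α * L) ∧
        L ≤ Q 1 ∧ ∀ p : ℝ, 0 ≤ p → p ≤ 1 → p = logistic (y - F + α * p) → p ≤ L := by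
  rw [logistic_eq_sigmoid] at hQ ⊢
  set f : ℝ → ℝ := fun q => Real.sigmoid (y - F + α * q)
  have hf : Monotone f := fun a b hab => Real.sigmoid_le (by gcongr)
  have hQf : Q = fun n => f^[n] 1 := by
    funext n
    induction n with
    | zero => exact hQ0
    | succ n ih => rw [hQ, ih, iterate_succ_apply']
  have hnonneg : ∀ t, 0 ≤ Q t
    | 0 => hQ0 ▸ zero_le_one
    | t + 1 => hQ t ▸ Real.sigmoid_nonneg _
  have hanti : Antitone Q := hQf ▸ hf.antitone_iterate_of_map_le (Real.sigmoid_le_one _)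
  obtain ⟨L, hL, hLfix, hLgreatest⟩ := hf.exists_tendsto_iterate_isGreatest_fixedPoints
    (by fun_prop) (Real.sigmoid_le_one _)
    (hQf ▸ ⟨0, Set.forall_mem_range.2 hnonneg⟩)
  rw [← hQf] at hL
  exact ⟨hanti, hnonneg, L, hL, hLfix.1.symm, hanti.le_of_tendsto hL 1,
    fun p _ hp1 hpfix => hLgreatest ⟨hpfix.symm, hp1⟩⟩
end
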